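/- arXiv:2511.22588 — 2 statements merged into one kernel-verified Lean document; each statement's English description precedes it below -/
import Mathlib

section
/- Let w = u^p where u is a primitive word over the ordered alphabet A and p ≥ 1, and let π be a permutation of A. Then w is π-clustering for A if and only if u is π-clustering for A. -/
/-- `wordPow u p` is the `p`-fold concatenation `u^p`. -/
def wordPow {A : Type*} (u : List A) : ℕ → List A
  | 0 => []
  | n + 1 => u ++ wordPow u n

/-- A word is primitive if it is not a proper integer power of another word. -/
def Primitive {A : Type*} (w : List A) : Prop :=
  ∀ (v : List A) (m : ℕ), w = wordPow v m → m = 1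

/-- The Burrows–Wheeler transform of a word: the last letters of its cyclic rotations
listed in non-decreasing lexicographic order. -/
def bwt {A : Type*} [LinearOrder A] (w : List A) : List A :=
  (Multiset.sort
    (((List.range w.length).map (fun i => w.rotate i) : List (List A)) : Multiset (List A)) (· ≤ ·)).filterMap
    List.getLast?

/-- `w` is `π`-clustering: its BWT is `π(a₁)^{k₁} ⋯ π(a_k)^{k_k}` where `a₁ < … < a_k`
enumerates the alphabet and `k_i` is the number of occurrences of `π(a_i)` in `w`. -/
def Clustering {A : Type*} [LinearOrder A] [Fintype A] (π : Equiv.Perm A) (w : List A) : Prop :=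
  bwt w =
    ((Finset.univ.sort (· ≤ ·)).map (fun a => List.replicate (w.count (π a)) (π a))).flatten

/-!
Every rotation of `u^p` is the `p`-th power of a rotation of `u`, and each rotation of `u`
arises this way exactly `p` times. Since `r ↦ r^p` preserves the lexicographic order of words of
equal length, the sorted rotations of `u^p` are those of `u`, raised to the `p`-th power and
repeated `p` times; so `bwt (u^p)` is `bwt u` with every letter repeated `p` times. The clustering
pattern of `u^p` is obtained from that of `u` in the same way, because letter counts are
multiplied by `p`, and repeating every letter `p` times is injective.
-/

open List

section

variable {A : Type*}

section WordPow

theorem wordPow_nil (p : ℕ) : wordPow ([] : List A) p = [] := by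
  induction p <;> simp_all [wordPow]

theorem length_wordPow (u : List A) (p : ℕ) : (wordPow u p).length = p * u.length := by
  induction p with
  | zero => simp [wordPow]
  | succ p ih => simp only [wordPow, length_append, ih]; ring

theorem count_wordPow [BEq A] (u : List A) (p : ℕ) (a : A) :
    (wordPow u p).count a = p * u.count a := by
  induction p with
  | zero => simp [wordPow]
  | succ p ih => simp only [wordPow, count_append, ih]; ring

theorem getLast?_wordPow (u : List A) {p : ℕ} (hp : p ≠ 0) :
    (wordPow u p).getLast? = u.getLast? := by
  obtain ⟨q, rfl⟩ := Nat.exists_eq_succ_of_ne_zero hp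
  induction q with
  | zero => simp [wordPow]
  | succ q ih => rw [wordPow, getLast?_append, ih (Nat.succ_ne_zero q), Option.or_self]

theorem append_wordPow_append_comm (x y : List A) (p : ℕ) :
    x ++ wordPow (y ++ x) p = wordPow (x ++ y) p ++ x := by
  induction p with
  | zero => simp [wordPow]
  | succ p ih => simp only [wordPow, append_assoc, ih]

theorem rotate_one_wordPow (u : List A) (p : ℕ) :
    (wordPow u p).rotate 1 = wordPow (u.rotate 1) p := by
  cases u with
  | nil => simp [wordPow_nil]
  | cons a t =>
    cases p with
    | zero => rfl
    | succ p =>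
      rw [wordPow, cons_append, rotate_cons_succ, rotate_zero, rotate_cons_succ, rotate_zero,
        wordPow, append_assoc]
      simpa using congrArg (t ++ ·) (append_wordPow_append_comm [a] t p).symm

theorem rotate_wordPow (u : List A) (p i : ℕ) :
    (wordPow u p).rotate i = wordPow (u.rotate i) p := by
  induction i with
  | zero => simp
  | succ i ih => rw [← rotate_rotate, ih, rotate_one_wordPow, rotate_rotate]

theorem map_range_mul_mod {α : Type*} (g : ℕ → α) (n p : ℕ) :
    (range (p * n)).map (fun i => g (i % n)) = wordPow ((range n).map g) p := by
  induction p with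
  | zero => simp [wordPow]
  | succ p ih =>
    rw [Nat.succ_mul, Nat.add_comm, range_add, map_append, wordPow, ← ih, map_map]
    congr 1
    · exact map_congr_left fun i hi => by rw [Nat.mod_eq_of_lt (mem_range.1 hi)]
    · exact map_congr_left fun i _ => by simp

end WordPow

section Stretch

def stretch (p : ℕ) (l : List A) : List A := l.flatMap (replicate p)

@[simp] theorem stretch_nil (p : ℕ) : stretch p ([] : List A) = [] := rfl

@[simp] theorem stretch_cons (p : ℕ) (a : A) (l : List A) :
    stretch p (a :: l) = replicate p a ++ stretch p l := rfl

theorem stretch_replicate (p k : ℕ) (a : A) :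
    stretch p (replicate k a) = replicate (p * k) a := by
  rw [stretch, flatMap_replicate, flatten_replicate_replicate, Nat.mul_comm]

theorem stretch_flatten (p : ℕ) (L : List (List A)) :
    stretch p L.flatten = (L.map (stretch p)).flatten := by
  induction L <;> simp_all [stretch]

theorem stretch_injective {p : ℕ} (hp : p ≠ 0) :
    Function.Injective (stretch p : List A → List A) := by
  intro l₁
  induction l₁ with
  | nil => rintro (_ | ⟨b, l₂⟩) h <;> simp_all
  | cons a l₁ ih =>
    rintro (_ | ⟨b, l₂⟩) h
    · simp_all
    · obtain ⟨hab, hl⟩ := append_inj h (by simp)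
      rw [(replicate_right_inj hp).1 hab, ih hl]

theorem filterMap_stretch {B : Type*} (f : A → Option B) (p : ℕ) (l : List A) :
    (stretch p l).filterMap f = stretch p (l.filterMap f) := by
  induction l with
  | nil => rfl
  | cons a l ih => cases h : f a <;> simp [h, ih]

theorem count_stretch [BEq A] [LawfulBEq A] (p : ℕ) (l : List A) (a : A) :
    (stretch p l).count a = p * l.count a := by
  induction l with
  | nil => simp
  | cons b l ih =>
    simp only [stretch_cons, count_append, count_replicate, ih, count_cons]
    split_ifs <;> ring

theorem wordPow_perm_stretch [DecidableEq A] (l : List A) (p : ℕ) : wordPow l p ~ stretch p l :=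
  perm_iff_count.2 fun a => by rw [count_wordPow, count_stretch]

theorem List.Perm.stretch {l₁ l₂ : List A} (h : l₁ ~ l₂) (p : ℕ) :
    stretch p l₁ ~ stretch p l₂ :=
  h.flatMap_right _

theorem List.Pairwise.stretch {r : A → A → Prop} [Std.Refl r] {l : List A} (h : l.Pairwise r)
    (p : ℕ) : (stretch p l).Pairwise r := by
  refine List.pairwise_flatMap.2 ⟨fun a _ => pairwise_replicate.2 (Or.inr (refl a)), ?_⟩
  exact h.imp fun hab x hx y hy => by rwa [eq_of_mem_replicate hx, eq_of_mem_replicate hy]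

end Stretch

theorem List.Lex.append_of_length_eq {r : A → A → Prop} {v w : List A} (h : Lex r v w)
    (hl : v.length = w.length) (x y : List A) : Lex r (v ++ x) (w ++ y) := by
  induction h with
  | nil => simp at hl
  | rel h => exact .rel h
  | cons _ ih => exact .cons (ih (by simpa using hl))

theorem wordPow_le_wordPow [LinearOrder A] {v w : List A} (hl : v.length = w.length) (h : v ≤ w)
    (p : ℕ) : wordPow v p ≤ wordPow w p := by
  rcases h.eq_or_lt with rfl | hlt
  · exact le_rfl
  · cases p with
    | zero => exact le_rfl
    | succ p => exact le_of_lt (Lex.append_of_length_eq hlt hl _ _)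

section BWT

/-- The rows of the Burrows–Wheeler matrix of `w`, before sorting. -/
def rotations (w : List A) : List (List A) := (range w.length).map fun i => w.rotate i

theorem length_of_mem_rotations {w r : List A} (h : r ∈ rotations w) : r.length = w.length := by
  obtain ⟨i, -, rfl⟩ := mem_map.1 h
  exact length_rotate _ _

theorem rotations_wordPow (u : List A) (p : ℕ) :
    rotations (wordPow u p) = wordPow ((rotations u).map (wordPow · p)) p := by
  have h := map_range_mul_mod (fun j => wordPow (u.rotate j) p) u.length p
  simp only [rotate_mod] at h
  rw [rotations, rotations, length_wordPow, map_map, Function.comp_def, ← h]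
  exact map_congr_left fun i _ => rotate_wordPow u p i

variable [LinearOrder A]

theorem bwt_eq_filterMap_sort (w : List A) :
    bwt w = (Multiset.sort (rotations w : Multiset (List A))).filterMap getLast? := rfl

theorem sort_rotations_wordPow (u : List A) (p : ℕ) :
    Multiset.sort (rotations (wordPow u p) : Multiset (List A)) =
      stretch p ((Multiset.sort (rotations u : Multiset (List A))).map (wordPow · p)) := by
  set S := Multiset.sort (rotations u : Multiset (List A))
  have hS : S ~ rotations u := Multiset.coe_eq_coe.1 (Multiset.sort_eq _ _)
  refine Perm.eq_of_pairwise' (Multiset.pairwise_sort _ _) ?sorted ?perm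
  case perm =>
    calc Multiset.sort (rotations (wordPow u p) : Multiset (List A))
        ~ rotations (wordPow u p) := Multiset.coe_eq_coe.1 (Multiset.sort_eq _ _)
      _ = wordPow ((rotations u).map (wordPow · p)) p := rotations_wordPow u p
      _ ~ stretch p ((rotations u).map (wordPow · p)) := wordPow_perm_stretch _ p
      _ ~ stretch p (S.map (wordPow · p)) := ((hS.map _).symm).stretch p
  case sorted =>
    have hlen : ∀ r ∈ S, r.length = u.length := fun r hr =>
      length_of_mem_rotations (hS.mem_iff.1 hr)
    refine Pairwise.stretch (pairwise_map.2 ?_) p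
    exact (Multiset.pairwise_sort _ _).imp_of_mem fun hv hw hvw =>
      wordPow_le_wordPow ((hlen _ hv).trans (hlen _ hw).symm) hvw p

theorem bwt_wordPow (u : List A) {p : ℕ} (hp : p ≠ 0) :
    bwt (wordPow u p) = stretch p (bwt u) := by
  rw [bwt_eq_filterMap_sort, sort_rotations_wordPow, filterMap_stretch, filterMap_map,
    bwt_eq_filterMap_sort]
  congr 2
  exact funext fun r => getLast?_wordPow r hp

end BWT

end

theorem clustering_pow_iff_general {A : Type*} [LinearOrder A] [Fintype A] (u : List A)
    (p : ℕ) (hp : 1 ≤ p) (π : Equiv.Perm A) :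
    Clustering π (wordPow u p) ↔ Clustering π u := by
  have hp₀ : p ≠ 0 := Nat.one_le_iff_ne_zero.1 hp
  have hblocks : ((Finset.univ.sort (· ≤ ·)).map
        (fun a => replicate ((wordPow u p).count (π a)) (π a))).flatten =
      stretch p ((Finset.univ.sort (· ≤ ·)).map
        (fun a => replicate (u.count (π a)) (π a))).flatten := by
    rw [stretch_flatten, map_map]
    exact congrArg flatten (map_congr_left fun a _ => by
      rw [Function.comp_apply, stretch_replicate, count_wordPow])
  rw [Clustering, Clustering, bwt_wordPow u hp₀, hblocks]
  exact (stretch_injective hp₀).eq_iff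

/-- Let `w = u^p` with `u` primitive and `p ≥ 1`. Then `w` is `π`-clustering if and only if
`u` is `π`-clustering. -/
theorem clustering_pow_iff {A : Type*} [LinearOrder A] [Fintype A] (u : List A)
    (hu : Primitive u) (p : ℕ) (hp : 1 ≤ p) (π : Equiv.Perm A) :
    Clustering π (wordPow u p) ↔ Clustering π u :=
  clustering_pow_iff_general u p hp π
end

section
/- Let T be a regular interval exchange transformation over the ordered alphabet A with permutation π. Then for every u ∈ L(T), every return word w to u in L(T) is π-clustering for A. -/
/-- An interval exchange transformation on `[l, l + Σ len a)` over the ordered alphabet `A`,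
with subinterval lengths `len` and permutation `perm`. -/
structure IET (A : Type*) [Fintype A] [LinearOrder A] where
  l : ℝ
  len : A → ℝ
  len_pos : ∀ a, 0 < len a
  perm : Equiv.Perm A

namespace IET

variable {A : Type*} [Fintype A] [LinearOrder A] (T : IET A)

/-- Right endpoint of the domain interval. -/
def right : ℝ := T.l + ∑ a, T.len a

/-- The domain `[ℓ, r)` of the IET. -/
def domain : Set ℝ := Set.Ico T.l T.right

/-- Left endpoint of the subinterval indexed by `a`. -/
def leftEnd (a : A) : ℝ := T.l + ∑ b ∈ Finset.univ.filter (· < a), T.len b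

/-- The subinterval `I_a`. -/
def seg (a : A) : Set ℝ := Set.Ico (T.leftEnd a) (T.leftEnd a + T.len a)

/-- Translation amount on `I_a`. -/
def τ (a : A) : ℝ :=
  (∑ b ∈ Finset.univ.filter (fun b => T.perm.symm b < T.perm.symm a), T.len b)
    - (∑ b ∈ Finset.univ.filter (· < a), T.len b)

open scoped Classical in
/-- The interval exchange transformation as a map `ℝ → ℝ` (identity off the domain). -/
noncomputable def map (x : ℝ) : ℝ :=
  if h : ∃ a, x ∈ T.seg a then x + T.τ h.choose else x

/-- The inverse transformation. -/
noncomputable def inv : ℝ → ℝ := Function.invFun T.map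

open scoped Classical in
/-- The letter of the subinterval containing `x`. -/
noncomputable def idx [Nonempty A] (x : ℝ) : A :=
  if h : ∃ a, x ∈ T.seg a then h.choose else Classical.arbitrary A

/-- The trajectory (natural coding) `Ω_T(x)` of `x`. -/
noncomputable def traj [Nonempty A] (x : ℝ) (n : ℕ) : A := T.idx (T.map^[n] x)

/-- The language of the IET: all finite factors of all trajectories. -/
def lang [Nonempty A] : Set (List A) :=
  { v | ∃ x ∈ T.domain, ∃ i : ℕ, v = (List.range v.length).map (fun j => T.traj x (i + j)) }

/-- The cylinder `I_w` of a word `w`. -/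
def cyl (w : List A) : Set ℝ :=
  { x | ∀ i : Fin w.length, T.map^[(i : ℕ)] x ∈ T.seg (w.get i) }

/-- Formal discontinuities of `T`. -/
def D : Set ℝ := { y | (∃ a, y = T.leftEnd a) ∧ y ≠ T.l }

/-- Formal discontinuities of the inverse of `T`. -/
def Dinv : Set ℝ :=
  { y | (∃ a, y = T.l + ∑ b ∈ Finset.univ.filter (fun b => T.perm.symm b < T.perm.symm a), T.len b)
      ∧ y ≠ T.l }

/-- `T^i` for an integer `i`. -/
noncomputable def iterZ (i : ℤ) (z : ℝ) : ℝ :=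
  if 0 ≤ i then T.map^[i.toNat] z else T.inv^[(-i).toNat] z

/-- Forward return time `ρ⁺_{J,T}(z)` of `z` to the open interval `(u, v)`. -/
noncomputable def rhoPlus (u v z : ℝ) : ℕ := sInf {n : ℕ | 0 < n ∧ T.map^[n] z ∈ Set.Ioo u v}

/-- Backward return time `ρ⁻_{J,T}(z)` of `z` to the open interval `(u, v)`. -/
noncomputable def rhoMinus (u v z : ℝ) : ℕ := sInf {n : ℕ | T.inv^[n] z ∈ Set.Ioo u v}

/-- The set `N_{J,T}(z)` for `J = [u, v)`. -/
noncomputable def Nset (u v z : ℝ) : Set ℝ :=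
  { y | ∃ i : ℤ, -(T.rhoMinus u v z : ℤ) ≤ i ∧ i ≤ (T.rhoPlus u v z : ℤ) - 1 ∧ y = T.iterZ i z }

/-- The set `Div(J, T)` for `J = [u, v)`. -/
noncomputable def Div (u v : ℝ) : Set ℝ := ⋃ γ ∈ T.D, T.Nset u v γ

/-- The interval `[u, v)` is admissible for `T`. -/
noncomputable def Admissible (u v : ℝ) : Prop :=
  u ∈ T.Div u v ∪ {T.right} ∧ v ∈ T.Div u v ∪ {T.right}

/-- Keane's regularity condition: the forward orbits of the formal discontinuities are
infinite and pairwise disjoint. -/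
def Regular : Prop :=
  ∀ γ ∈ T.D, ∀ γ' ∈ T.D, ∀ m n : ℕ, T.map^[m] γ = T.map^[n] γ' → γ = γ' ∧ m = n

end IET

open scoped Classical in
/-- First return time of `x` to `J` under `f` (junk value `0` if it never returns). -/
noncomputable def returnTime (f : ℝ → ℝ) (J : Set ℝ) (x : ℝ) : ℕ :=
  if h : ∃ n, 0 < n ∧ f^[n] x ∈ J then Nat.find h else 0

/-- First return map of `f` to `J`. -/
noncomputable def firstReturn (f : ℝ → ℝ) (J : Set ℝ) (x : ℝ) : ℝ :=
  f^[returnTime f J x] x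

/-- A finite word is a prefix of an infinite word (a sequence). -/
def SeqPrefix {α : Type*} (l : List α) (f : ℕ → α) : Prop :=
  ∀ i : Fin l.length, l.get i = f i

/-- `w` is a (left) return word to `u` in the language `L`: `wu ∈ L`, `u` is a prefix and a
suffix of `wu`, and `u` occurs exactly twice as a factor of `wu`. -/
def IsReturnWord {A : Type*} [DecidableEq A] (L : Set (List A)) (u w : List A) : Prop :=
  (w ++ u) ∈ L ∧ u <+: (w ++ u) ∧ u <:+ (w ++ u) ∧
    ((List.range ((w ++ u).length + 1)).countP
      (fun i => decide (u <+: (w ++ u).drop i))) = 2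

/-!
Let `y` be a point whose trajectory begins with `wu`, and `n = |w|`. For `1 ≤ a ≤ n` the
rotation of `w` starting at `a` is read along the orbit from `T^a y`, and since `u` occurs in
`wu` only at `0` and `n`, two such rotations first differ inside `wu`: the lexicographic order
of the rotations is the order of the points `T^a y`. The last letter of the rotation at `a` is
the letter of `T^(a-1) y`, and `T` maps `I_c` by a translation onto the `π⁻¹ c`-th interval of
the image partition, so the order of the points `T^a y` sorts these letters by `π⁻¹`. Hence
the BWT of `w` is `π⁻¹`-sorted, which is what `π`-clustering means.
-/

theorem Finset.sum_filter_lt_add_le {ι β : Type*} [Fintype ι] [LinearOrder β] (key : ι → β)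
    {len : ι → ℝ} (hlen : ∀ i, 0 ≤ len i) {a b : ι} (hab : key a < key b) :
    ∑ c ∈ univ.filter (fun c => key c < key a), len c + len a
      ≤ ∑ c ∈ univ.filter (fun c => key c < key b), len c := by
  classical
  rw [add_comm, ← sum_insert (s := univ.filter _) (by simp)]
  refine sum_le_sum_of_subset_of_nonneg (fun c hc => ?_) fun c _ _ => hlen c
  simp only [mem_insert, mem_filter, mem_univ, true_and] at hc ⊢
  rcases hc with rfl | hc
  exacts [hab, hc.trans hab]

theorem Finset.sum_filter_lt_add_le_sum {ι β : Type*} [Fintype ι] [LinearOrder β]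
    (key : ι → β) {len : ι → ℝ} (hlen : ∀ i, 0 ≤ len i) (a : ι) :
    ∑ c ∈ univ.filter (fun c => key c < key a), len c + len a ≤ ∑ c, len c := by
  classical
  rw [add_comm, ← sum_insert (s := univ.filter _) (by simp)]
  exact sum_le_sum_of_subset_of_nonneg (subset_univ _) fun c _ _ => hlen c

namespace List

variable {α : Type*}

theorem getElem_append_mod_of_prefix {w u : List α} (h : u <+: w ++ u) {q : ℕ}
    (hq : q < (w ++ u).length) :
    (w ++ u)[q] = (w ++ u)[q % w.length]'((Nat.mod_le _ _).trans_lt hq) := by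
  induction q using Nat.strong_induction_on with
  | _ q ih =>
  rcases lt_or_ge q w.length with hqw | hqw
  · simp only [Nat.mod_eq_of_lt hqw]
  rcases Nat.eq_zero_or_pos w.length with hw | hw
  · simp only [hw, Nat.mod_zero]
  have hqu : q - w.length < u.length := by simp at hq; omega
  have hsub : q - w.length < (w ++ u).length := by omega
  calc (w ++ u)[q] = u[q - w.length] := getElem_append_right hqw
    _ = (w ++ u)[q - w.length] := (prefix_iff_getElem.1 h).2 _ hqu
    _ = (w ++ u)[(q - w.length) % w.length]'((Nat.mod_le _ _).trans_lt hsub) :=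
      ih _ (by omega) hsub
    _ = (w ++ u)[q % w.length]'((Nat.mod_le _ _).trans_lt hq) := by
      simp only [← Nat.mod_eq_sub_mod hqw]

theorem getLast?_rotate_succ {w : List α} {k : ℕ} (hk : k < w.length) :
    (w.rotate (k + 1)).getLast? = some w[k] := by
  rw [getLast?_eq_getElem?, length_rotate, getElem?_eq_getElem (by simp; omega), getElem_rotate]
  simp [show w.length - 1 + (k + 1) = k + w.length by omega, Nat.mod_eq_of_lt hk]

theorem map_rotate_range_perm (w : List α) :
    (range w.length).map w.rotate
      ~ (finRange w.length).map fun k : Fin w.length => w.rotate (k + 1 : ℕ) := by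
  have : ((range w.length).map w.rotate).rotate 1
      = (finRange w.length).map fun k : Fin w.length => w.rotate (k + 1 : ℕ) := by
    refine ext_getElem (by simp) fun k _ _ => ?_
    simp [getElem_rotate, rotate_mod]
  rw [← this]
  exact (rotate_perm _ 1).symm

theorem perm_flatten_map_replicate_count [DecidableEq α] {w L : List α} (hL : L.Nodup)
    (hwL : ∀ a ∈ w, a ∈ L) : (L.map fun a => replicate (w.count a) a).flatten ~ w := by
  rw [perm_iff_count]
  intro c
  rw [count_flatten, map_map]
  simp only [Function.comp_def, count_replicate, beq_iff_eq]
  rw [← sum_toFinset _ hL, Finset.sum_ite_eq']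
  by_cases hc : c ∈ w
  · simp [hwL c hc]
  · simp [count_eq_zero_of_not_mem hc]

end List

section BWT

variable {A : Type*} [LinearOrder A]

theorem sort_rotations_perm (w : List A) :
    (Multiset.sort (↑((List.range w.length).map w.rotate)) (· ≤ ·)).Perm
      ((List.finRange w.length).map fun k : Fin w.length => w.rotate (k + 1 : ℕ)) :=
  (Multiset.coe_eq_coe.1 (Multiset.sort_eq _ _)).trans w.map_rotate_range_perm

theorem bwt_perm (w : List A) : (bwt w).Perm w := by
  have hlast : List.filterMap List.getLast?
      ((List.finRange w.length).map fun k : Fin w.length => w.rotate (k + 1 : ℕ)) = w := by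
    rw [List.filterMap_map, List.filterMap_congr fun k _ => List.getLast?_rotate_succ k.2,
      List.filterMap_eq_map', ← List.ofFn_eq_map, List.ofFn_getElem]
  exact ((sort_rotations_perm w).filterMap _).trans (.of_eq hlast)

/-- `w[k]` is the last letter of `w.rotate (k + 1)`. -/
theorem pairwise_bwt {w : List A} {R : A → A → Prop} (hrefl : ∀ a, R a a)
    (h : ∀ k l (hk : k < w.length) (hl : l < w.length),
      w.rotate (k + 1) < w.rotate (l + 1) → R w[k] w[l]) :
    (bwt w).Pairwise R := by
  rw [bwt, List.pairwise_filterMap]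
  refine (Multiset.pairwise_sort _ _).imp_of_mem fun hv hv' hle b hb b' hb' => ?_
  obtain ⟨k, -, rfl⟩ := List.mem_map.1 ((sort_rotations_perm w).subset hv)
  obtain ⟨l, -, rfl⟩ := List.mem_map.1 ((sort_rotations_perm w).subset hv')
  rw [List.getLast?_rotate_succ k.2, Option.some_inj] at hb
  rw [List.getLast?_rotate_succ l.2, Option.some_inj] at hb'
  subst hb hb'
  rcases hle.lt_or_eq with hlt | heq
  · exact h k l k.2 l.2 hlt
  · have := congrArg List.getLast? heq
    rw [List.getLast?_rotate_succ k.2, List.getLast?_rotate_succ l.2, Option.some_inj] at this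
    exact this ▸ hrefl _

theorem clustering_of_pairwise_bwt [Fintype A] {π : Equiv.Perm A} {w : List A}
    (hsorted : (bwt w).Pairwise fun a b => π.symm a ≤ π.symm b) : Clustering π w := by
  have : Std.Antisymm fun a b : A => π.symm a ≤ π.symm b :=
    ⟨fun _ _ h₁ h₂ => π.symm.injective (le_antisymm h₁ h₂)⟩
  refine List.Perm.eq_of_pairwise' hsorted ?_ ((bwt_perm w).trans ?_)
  · rw [List.pairwise_flatten, List.pairwise_map]
    refine ⟨fun l hl => ?_, (Finset.pairwise_sort _ _).imp fun hab x hx y hy => ?_⟩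
    · obtain ⟨a, -, rfl⟩ := List.mem_map.1 hl
      exact List.pairwise_replicate.2 (Or.inr le_rfl)
    · rw [List.eq_of_mem_replicate hx, List.eq_of_mem_replicate hy]
      simpa using hab
  · have := List.perm_flatten_map_replicate_count (w := w)
      ((Finset.sort_nodup Finset.univ (· ≤ ·)).map π.injective)
      fun a _ => List.mem_map.2 ⟨π.symm a, by simp, by simp⟩
    simpa only [List.map_map, Function.comp_def] using this.symm

end BWT

namespace IsReturnWord

variable {α : Type*} [DecidableEq α] {L : Set (List α)} {u w : List α}

theorem length_pos (hw : IsReturnWord L u w) : 0 < w.length := by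
  obtain ⟨-, -, -, hcount⟩ := hw
  by_contra! h
  obtain rfl : w = [] := List.length_eq_zero_iff.1 (by omega)
  have hsub : ((List.range (u.length + 1)).filter fun i => decide (u <+: u.drop i)) ⊆ [0] := by
    intro i hi
    simp only [List.mem_filter, List.mem_range, decide_eq_true_eq] at hi
    have := hi.2.length_le
    simp only [List.length_drop, List.mem_singleton] at this ⊢
    omega
  have := ((List.nodup_range.filter _).subperm hsub).length_le
  rw [List.nil_append, List.countP_eq_length_filter] at hcount
  simp [hcount] at this

theorem not_prefix_drop (hw : IsReturnWord L u w) {p : ℕ} (hp : 0 < p) (hpw : p < w.length) :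
    ¬ u <+: (w ++ u).drop p := by
  obtain ⟨-, hpre, -, hcount⟩ := hw
  intro hocc
  have hsub : [0, p, w.length] ⊆
      (List.range ((w ++ u).length + 1)).filter fun i => decide (u <+: (w ++ u).drop i) := by
    intro i hi
    simp only [List.mem_cons, List.not_mem_nil, or_false] at hi
    simp only [List.mem_filter, List.mem_range, List.length_append, decide_eq_true_eq]
    rcases hi with rfl | rfl | rfl
    · exact ⟨by omega, by simpa using hpre⟩
    · exact ⟨by omega, hocc⟩
    · exact ⟨by omega, by simp⟩
  have := ((by simp; omega : [0, p, w.length].Nodup).subperm hsub).length_le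
  rw [← List.countP_eq_length_filter, hcount] at this
  simp at this

theorem apply_mod (hw : IsReturnWord L u w) {c : ℕ → α}
    (hc : ∀ j (hj : j < (w ++ u).length), c j = (w ++ u)[j]) {q : ℕ}
    (hq : q < w.length + u.length) : c q = c (q % w.length) := by
  have hq' : q < (w ++ u).length := by simpa using hq
  rw [hc q hq', hc _ ((Nat.mod_le _ _).trans_lt hq'), List.getElem_append_mod_of_prefix hw.2.1]

theorem exists_apply_ne (hw : IsReturnWord L u w) {c : ℕ → α}
    (hc : ∀ j (hj : j < (w ++ u).length), c j = (w ++ u)[j]) {p : ℕ} (hp : 0 < p)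
    (hpw : p < w.length) : ∃ r < u.length, c (p + r) ≠ c r := by
  by_contra! h
  refine hw.not_prefix_drop hp hpw (List.prefix_iff_getElem.2 ⟨by simp; omega, fun r hr => ?_⟩)
  rw [List.getElem_drop, ← hc _ (by simp; omega), h r hr, hc r (by simp; omega)]
  exact (List.prefix_iff_getElem.1 hw.2.1).2 r hr

end IsReturnWord

theorem add_lt_of_forall_apply_mod_eq {α : Type*} {c : ℕ → α} {n m : ℕ}
    (hper : ∀ q < n + m, c q = c (q % n))
    (hocc : ∀ p, 0 < p → p < n → ∃ r < m, c (p + r) ≠ c r)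
    {a b t : ℕ} (ha : 0 < a) (hab : a < b) (hb : b ≤ n)
    (heq : ∀ s < t, c ((s + a) % n) = c ((s + b) % n)) : b + t < n + m := by
  -- agreement on `[0, t)` would put a second occurrence of `c 0 ⋯ c (m - 1)` at `n - (b - a)`
  by_contra! ht
  obtain ⟨r, hr, hne⟩ := hocc (n - (b - a)) (by omega) (by omega)
  have hs := heq (n - b + r) (by omega)
  rw [show n - b + r + a = n - (b - a) + r by omega, show n - b + r + b = r + n by omega,
    Nat.add_mod_right, ← hper _ (by omega), ← hper _ (by omega)] at hs
  exact hne hs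

namespace IET

variable {A : Type*} [Fintype A] [LinearOrder A] (T : IET A)

theorem leftEnd_add_len_le {a b : A} (hab : a < b) : T.leftEnd a + T.len a ≤ T.leftEnd b := by
  have := Finset.sum_filter_lt_add_le id (fun c => (T.len_pos c).le) hab
  simp only [leftEnd, id] at this ⊢
  linarith

theorem leftEnd_add_len (a : A) :
    T.leftEnd a + T.len a = T.l + ∑ b ∈ Finset.univ.filter (· ≤ a), T.len b := by
  have : Finset.univ.filter (· ≤ a) = insert a (Finset.univ.filter (· < a)) := by
    ext; simp [le_iff_lt_or_eq, or_comm]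
  rw [leftEnd, this, Finset.sum_insert (by simp)]
  ring

variable {T}

theorem lt_of_mem_seg {a b : A} (hab : a < b) {x x' : ℝ} (hx : x ∈ T.seg a)
    (hx' : x' ∈ T.seg b) : x < x' := by
  linarith [T.leftEnd_add_len_le hab, hx.2, hx'.1]

theorem eq_of_mem_seg {a b : A} {x : ℝ} (ha : x ∈ T.seg a) (hb : x ∈ T.seg b) : a = b := by
  by_contra hab
  rcases Ne.lt_or_gt hab with h | h
  exacts [(lt_of_mem_seg h ha hb).false, (lt_of_mem_seg h hb ha).false]

theorem map_eq_of_mem_seg {a : A} {x : ℝ} (hx : x ∈ T.seg a) : T.map x = x + T.τ a := by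
  have hex : ∃ b, x ∈ T.seg b := ⟨a, hx⟩
  rw [map, dif_pos hex, eq_of_mem_seg hex.choose_spec hx]

theorem map_mem_Ico {a : A} {x : ℝ} (hx : x ∈ T.seg a) :
    T.map x ∈ Set.Ico
      (T.l + ∑ b ∈ Finset.univ.filter (fun b => T.perm.symm b < T.perm.symm a), T.len b)
      (T.l + ∑ b ∈ Finset.univ.filter (fun b => T.perm.symm b < T.perm.symm a), T.len b
        + T.len a) := by
  rw [map_eq_of_mem_seg hx]
  obtain ⟨h₁, h₂⟩ := hx
  simp only [leftEnd, τ] at h₁ h₂ ⊢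
  constructor <;> linarith

variable [Nonempty A]

theorem exists_mem_seg {x : ℝ} (hx : x ∈ T.domain) : ∃ a, x ∈ T.seg a := by
  classical
  have hne : (Finset.univ.filter fun a => x < T.leftEnd a + T.len a).Nonempty := by
    refine ⟨Finset.univ.max' Finset.univ_nonempty,
      Finset.mem_filter.2 ⟨Finset.mem_univ _, ?_⟩⟩
    rw [leftEnd_add_len, Finset.filter_true_of_mem fun b _ => Finset.le_max' _ b (by simp)]
    exact hx.2
  obtain ⟨a, ha, hmin⟩ := Finset.exists_min_image _ id hne
  refine ⟨a, ?_, (Finset.mem_filter.1 ha).2⟩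
  by_cases hbot : ∀ c, a ≤ c
  · rw [leftEnd, Finset.filter_false_of_mem fun c _ => not_lt.2 (hbot c), Finset.sum_empty,
      add_zero]
    exact hx.1
  · obtain ⟨b, hb, hmax⟩ := Finset.exists_max_image (Finset.univ.filter (· < a)) id
      (by simpa [Finset.filter_nonempty_iff] using hbot)
    have hIio : Finset.univ.filter (· < a) = Finset.univ.filter (· ≤ b) :=
      Finset.filter_congr fun c _ =>
        ⟨fun hc => hmax c (by simpa using hc), fun hc => hc.trans_lt (by simpa using hb)⟩
    have hbx : T.leftEnd b + T.len b ≤ x := by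
      by_contra! h
      exact (hmin b (by simpa using h)).not_gt (by simpa using hb)
    rw [leftEnd, hIio, ← leftEnd_add_len]
    exact hbx

theorem idx_eq_of_mem_seg {a : A} {x : ℝ} (hx : x ∈ T.seg a) : T.idx x = a := by
  have hex : ∃ b, x ∈ T.seg b := ⟨a, hx⟩
  rw [idx, dif_pos hex]
  exact eq_of_mem_seg hex.choose_spec hx

theorem mem_seg_idx {x : ℝ} (hx : x ∈ T.domain) : x ∈ T.seg (T.idx x) := by
  obtain ⟨a, ha⟩ := exists_mem_seg hx
  rwa [idx_eq_of_mem_seg ha]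

theorem map_mem_domain {x : ℝ} (hx : x ∈ T.domain) : T.map x ∈ T.domain := by
  obtain ⟨a, ha⟩ := exists_mem_seg hx
  obtain ⟨h₁, h₂⟩ := map_mem_Ico ha
  have := Finset.sum_filter_lt_add_le_sum T.perm.symm (fun c => (T.len_pos c).le) a
  refine ⟨le_trans ?_ h₁, h₂.trans_le (by rw [right]; linarith)⟩
  exact le_add_of_nonneg_right (Finset.sum_nonneg fun c _ => (T.len_pos c).le)

theorem iterate_map_mem_domain {x : ℝ} (hx : x ∈ T.domain) (k : ℕ) :
    T.map^[k] x ∈ T.domain := by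
  induction k with
  | zero => exact hx
  | succ k ih => rw [Function.iterate_succ_apply']; exact map_mem_domain ih

theorem perm_symm_idx_le_of_map_lt {x x' : ℝ} (hx : x ∈ T.domain)
    (hx' : x' ∈ T.domain) (h : T.map x < T.map x') :
    T.perm.symm (T.idx x) ≤ T.perm.symm (T.idx x') := by
  by_contra! hlt
  have := Finset.sum_filter_lt_add_le T.perm.symm (fun c => (T.len_pos c).le) hlt
  linarith [(map_mem_Ico (mem_seg_idx hx)).1, (map_mem_Ico (mem_seg_idx hx')).2]

theorem traj_iterate (x : ℝ) (k s : ℕ) : T.traj (T.map^[k] x) s = T.traj x (s + k) := by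
  simp only [traj, Function.iterate_add_apply]

theorem traj_map (x : ℝ) (s : ℕ) : T.traj (T.map x) s = T.traj x (s + 1) :=
  traj_iterate x 1 s

theorem lt_of_traj_lt {x x' : ℝ} (hx : x ∈ T.domain) (hx' : x' ∈ T.domain) {t : ℕ}
    (heq : ∀ s < t, T.traj x s = T.traj x' s) (hlt : T.traj x t < T.traj x' t) : x < x' := by
  induction t generalizing x x' with
  | zero => exact lt_of_mem_seg hlt (mem_seg_idx hx) (mem_seg_idx hx')
  | succ t ih =>
    have h₀ : T.idx x = T.idx x' := heq 0 t.succ_pos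
    have hmap : T.map x < T.map x' :=
      ih (map_mem_domain hx) (map_mem_domain hx')
        (fun s hs => by simpa only [traj_map] using heq (s + 1) (by omega))
        (by simpa only [traj_map] using hlt)
    rw [map_eq_of_mem_seg (mem_seg_idx hx), map_eq_of_mem_seg (mem_seg_idx hx'), h₀] at hmap
    linarith

theorem exists_traj_eq_of_mem_lang {v : List A} (hv : v ∈ T.lang) :
    ∃ y ∈ T.domain, ∀ j (hj : j < v.length), T.traj y j = v[j] := by
  obtain ⟨x, hx, i, hxv⟩ := hv
  refine ⟨T.map^[i] x, iterate_map_mem_domain hx i, fun j hj => ?_⟩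
  rw [traj_iterate, List.getElem_of_eq hxv]
  simp [add_comm]

theorem iterate_lt_of_traj_mod_lt {y : ℝ} (hy : y ∈ T.domain) {n m : ℕ}
    (hper : ∀ q < n + m, T.traj y q = T.traj y (q % n))
    (hocc : ∀ p, 0 < p → p < n → ∃ r < m, T.traj y (p + r) ≠ T.traj y r)
    {a b t : ℕ} (ha : 0 < a) (hb : 0 < b) (han : a ≤ n) (hbn : b ≤ n)
    (heq : ∀ s < t, T.traj y ((s + a) % n) = T.traj y ((s + b) % n))
    (hlt : T.traj y ((t + a) % n) < T.traj y ((t + b) % n)) :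
    T.map^[a] y < T.map^[b] y := by
  have hta : t + a < n + m ∧ t + b < n + m := by
    rcases lt_trichotomy a b with hab | rfl | hab
    · have := add_lt_of_forall_apply_mod_eq hper hocc ha hab hbn heq
      omega
    · exact absurd hlt (lt_irrefl _)
    · have := add_lt_of_forall_apply_mod_eq hper hocc hb hab han fun s hs => (heq s hs).symm
      omega
  refine lt_of_traj_lt (iterate_map_mem_domain hy a) (iterate_map_mem_domain hy b)
    (t := t) (fun s hs => ?_) ?_
  · rw [traj_iterate, traj_iterate, hper _ (by omega), hper (s + b) (by omega)]
    exact heq s hs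
  · rwa [traj_iterate, traj_iterate, hper _ hta.1, hper _ hta.2]

end IET

theorem IsReturnWord.perm_symm_le_of_rotate_lt {A : Type*} [Fintype A] [LinearOrder A]
    [Nonempty A] {T : IET A} {u w : List A} (hw : IsReturnWord T.lang u w) {k l : ℕ}
    (hk : k < w.length) (hl : l < w.length) (h : w.rotate (k + 1) < w.rotate (l + 1)) :
    T.perm.symm w[k] ≤ T.perm.symm w[l] := by
  obtain ⟨y, hy, hyw⟩ := T.exists_traj_eq_of_mem_lang hw.1
  have hyw' : ∀ j (hj : j < w.length), T.traj y j = w[j] := fun j hj => by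
    rw [hyw j (by simp; omega), List.getElem_append_left hj]
  have hrot : ∀ a s (hs : s < (w.rotate a).length),
      (w.rotate a)[s] = T.traj y ((s + a) % w.length) := fun a s hs => by
    rw [List.getElem_rotate, hyw' _ (Nat.mod_lt _ hw.length_pos)]
  obtain ⟨t, _, _, hagree, hlt⟩ := (List.lt_iff_exists.1 h).resolve_left (by simp)
  have hmap := IET.iterate_lt_of_traj_mod_lt hy (fun q => hw.apply_mod hyw)
    (fun p => hw.exists_apply_ne hyw) k.succ_pos l.succ_pos hk hl
    (fun s hs => by simpa only [hrot] using hagree s hs) (by simpa only [hrot] using hlt)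
  rw [Function.iterate_succ_apply', Function.iterate_succ_apply'] at hmap
  rw [← hyw' k hk, ← hyw' l hl]
  exact IET.perm_symm_idx_le_of_map_lt (IET.iterate_map_mem_domain hy k)
    (IET.iterate_map_mem_domain hy l) hmap

theorem returnWord_clustering_of_regular_general {A : Type*} [Fintype A] [LinearOrder A] [Nonempty A]
    (T : IET A) :
    ∀ u ∈ T.lang, ∀ w : List A, IsReturnWord T.lang u w → Clustering T.perm w :=
  fun _ _ _ hw => clustering_of_pairwise_bwt <|
    pairwise_bwt (fun _ => le_rfl) fun _ _ hk hl => hw.perm_symm_le_of_rotate_lt hk hl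

/-- In the language of a regular IET with permutation `π`, every return word is
`π`-clustering. -/
theorem returnWord_clustering_of_regular {A : Type*} [Fintype A] [LinearOrder A] [Nonempty A]
    (T : IET A) (hreg : T.Regular) :
    ∀ u ∈ T.lang, ∀ w : List A, IsReturnWord T.lang u w → Clustering T.perm w :=
  returnWord_clustering_of_regular_general T
end
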